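/- arXiv:1404.2522 — 2 statements merged into one kernel-verified Lean document; each statement's English description precedes it below -/
import Mathlib

section
/- Let ρ₀ ∈ L^∞(Ω) and ρ_b ∈ L^∞(Γ_T; μ⁻) satisfy ρ₀(x) ∈ [ρ⁰, ρ¹] a.e. in Ω and ρ_b ∈ [ρ⁰, ρ¹] a.e. on Γ_T⁻ for reals ρ⁰ < ρ¹. Suppose the transport problem ∂_t ρ + div(vρ) = 0, ρ|_{t=0} = ρ₀, ρ = ρ_b on Γ_T⁻ admits a unique renormalized weak solution pair (ρ, ρᵒ) ∈ L^∞(Ω_T) × L^∞(Γ_T; μ⁺), and that the zero function is the unique solution of the transport system with zero initial and inflow data. Then ρ ∈ [ρ⁰, ρ¹] a.e. in Ω_T and ρᵒ ∈ [ρ⁰, ρ¹] a.e. on Γ_T⁺. -/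
open MeasureTheory Set Filter

private def pos2 (x : ℝ) : ℝ := (max x 0)^2

private lemma pos2_hasDerivAt (x : ℝ) : HasDerivAt pos2 (2 * max x 0) x := by
  rcases lt_trichotomy x 0 with h | h | h
  · have : pos2 =ᶠ[nhds x] (fun _ => (0:ℝ)) := by
      filter_upwards [eventually_lt_nhds h] with y hy
      simp [pos2, max_eq_right hy.le]
    have hd : HasDerivAt (fun _ : ℝ => (0:ℝ)) 0 x := hasDerivAt_const x 0
    simpa [max_eq_right h.le] using hd.congr_of_eventuallyEq this
  · subst h
    rw [hasDerivAt_iff_isLittleO, Asymptotics.isLittleO_iff]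
    intro c hc
    filter_upwards [Metric.ball_mem_nhds (0:ℝ) hc] with y hy
    have hyc : |y| < c := by simpa [Real.dist_eq] using hy
    have h1 : |max y 0| ≤ |y| := by
      rcases le_or_gt y 0 with h | h
      · simp [max_eq_right h]
      · simp [max_eq_left h.le]
    have : ‖pos2 y - pos2 0 - (y - 0) • (2 * max (0:ℝ) 0)‖ = |max y 0| * |max y 0| := by
      simp [pos2, sq, abs_mul]
    rw [this]
    calc |max y 0| * |max y 0| ≤ c * |y| :=
          mul_le_mul (le_trans h1 hyc.le) h1 (abs_nonneg _) hc.le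
      _ = c * ‖y - 0‖ := by simp
  · have : pos2 =ᶠ[nhds x] (fun y => y^2) := by
      filter_upwards [eventually_gt_nhds h] with y hy
      simp [pos2, max_eq_left hy.le]
    have hd : HasDerivAt (fun y : ℝ => y^2) (2*x) x := by
      simpa using (hasDerivAt_pow 2 x)
    simpa [max_eq_left h.le] using hd.congr_of_eventuallyEq this

private lemma pos2_contDiff : ContDiff ℝ 1 pos2 := by
  rw [contDiff_one_iff_deriv]
  have hderiv : deriv pos2 = fun x => 2 * max x 0 :=
    funext fun x => (pos2_hasDerivAt x).deriv
  exact ⟨fun x => (pos2_hasDerivAt x).differentiableAt,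
    hderiv ▸ (continuous_const.mul (continuous_id.max continuous_const))⟩

private lemma pos2_nonneg (x : ℝ) : 0 ≤ pos2 x := sq_nonneg _

private lemma pos2_eq_zero_iff {x : ℝ} : pos2 x = 0 ↔ x ≤ 0 := by
  constructor
  · intro h
    by_contra hx
    push_neg at hx
    have : max x 0 = x := max_eq_left hx.le
    rw [pos2, this] at h
    exact hx.ne' (pow_eq_zero_iff two_ne_zero |>.mp h)
  · intro h; simp [pos2, max_eq_right h]


/-- Maximum principle for the transport equation via renormalization: if the
initial datum ρ₀ and the inflow datum ρ_b take values a.e. in [ρ⁰,ρ¹], if the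
(unique) solution pair (ρ,ρᵒ) is renormalized — i.e. for every C¹ function β the
pair (β∘ρ, β∘ρᵒ) solves the transport problem with data β∘ρ₀, β∘ρ_b — and if the
zero pair is the unique solution of the problem with zero data, then
ρ ∈ [ρ⁰,ρ¹] a.e. in Ω_T and ρᵒ ∈ [ρ⁰,ρ¹] a.e. (for μ⁺) on Γ_T⁺. -/
theorem stmt_4
    {ΩT Ωsp ΓT : Type*} [MeasurableSpace ΩT] [MeasurableSpace Ωsp] [MeasurableSpace ΓT]
    (μT : Measure ΩT) (μΩ : Measure Ωsp) (μplus μminus : Measure ΓT)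
    -- `Sol d₀ d_b (ρ, ρᵒ)` : (ρ,ρᵒ) is a weak solution of
    -- ∂ₜρ + div(vρ) = 0, ρ|_{t=0} = d₀, ρ = d_b on Γ_T⁻, with outflow trace ρᵒ
    (Sol : (Ωsp → ℝ) → (ΓT → ℝ) → (ΩT → ℝ) × (ΓT → ℝ) → Prop)
    (ρ0 : Ωsp → ℝ) (ρb : ΓT → ℝ) (ρ : ΩT → ℝ) (ρo : ΓT → ℝ)
    (ρlo ρhi : ℝ) (hlt : ρlo < ρhi)
    (h0 : ∀ᵐ x ∂μΩ, ρ0 x ∈ Icc ρlo ρhi)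
    (hb : ∀ᵐ x ∂μminus, ρb x ∈ Icc ρlo ρhi)
    (hsol : Sol ρ0 ρb (ρ, ρo))
    -- the pair (ρ,ρᵒ) is a renormalized solution
    (hren : ∀ β : ℝ → ℝ, ContDiff ℝ 1 β →
      Sol (fun x => β (ρ0 x)) (fun x => β (ρb x)) (fun x => β (ρ x), fun x => β (ρo x)))
    -- solutions depend only on the a.e. classes of the data
    (hcongr : ∀ d0 d0' db db' p, (d0 =ᵐ[μΩ] d0') → (db =ᵐ[μminus] db') →
      Sol d0 db p → Sol d0' db' p)
    -- zero is the unique solution of the problem with zero data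
    (hzero : ∀ p, Sol (fun _ => 0) (fun _ => 0) p →
      (p.1 =ᵐ[μT] fun _ => 0) ∧ (p.2 =ᵐ[μplus] fun _ => 0)) :
    (∀ᵐ x ∂μT, ρ x ∈ Icc ρlo ρhi) ∧ (∀ᵐ x ∂μplus, ρo x ∈ Icc ρlo ρhi) := by
  set β : ℝ → ℝ := fun t => pos2 (t - ρhi) + pos2 (ρlo - t) with hβdef
  have hβ : ContDiff ℝ 1 β := by
    apply ContDiff.add
    · exact pos2_contDiff.comp (contDiff_id.sub contDiff_const)
    · exact pos2_contDiff.comp (contDiff_const.sub contDiff_id)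
  have key : ∀ t : ℝ, β t = 0 ↔ t ∈ Icc ρlo ρhi := by
    intro t
    rw [hβdef]
    simp only
    constructor
    · intro h
      have h1 : pos2 (t - ρhi) = 0 := by
        have := pos2_nonneg (t - ρhi); have := pos2_nonneg (ρlo - t); linarith
      have h2 : pos2 (ρlo - t) = 0 := by
        have := pos2_nonneg (t - ρhi); have := pos2_nonneg (ρlo - t); linarith
      have h1' := pos2_eq_zero_iff.mp h1
      have h2' := pos2_eq_zero_iff.mp h2
      exact ⟨by linarith, by linarith⟩
    · rintro ⟨h1, h2⟩
      rw [pos2_eq_zero_iff.mpr (by linarith), pos2_eq_zero_iff.mpr (by linarith), add_zero]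
  have h0' : (fun x => β (ρ0 x)) =ᵐ[μΩ] fun _ => 0 := by
    filter_upwards [h0] with x hx using (key _).mpr hx
  have hb' : (fun x => β (ρb x)) =ᵐ[μminus] fun _ => 0 := by
    filter_upwards [hb] with x hx using (key _).mpr hx
  have hsol0 := hcongr _ _ _ _ _ h0' hb' (hren β hβ)
  obtain ⟨h1, h2⟩ := hzero _ hsol0
  constructor
  · filter_upwards [h1] with x hx using (key _).mp hx
  · filter_upwards [h2] with x hx using (key _).mp hx
end

section
/- Suppose (ρ, ρᵒ) is a renormalized weak solution of the transport problem ∂_t ρ + div(vρ) = 0 with initial data ρ₀ and inflow data ρ_b, where ρ₀ takes values in [ρ₁⁰, ρ₁¹] ∪ [ρ₂⁰, ρ₂¹] a.e. (with ρ₁⁰ ≤ ρ₁¹ < ρ₂⁰ ≤ ρ₂¹) and likewise ρ_b on Γ_T⁻, and suppose zero is the unique solution of the transport system with zero data. Then ρ(t,x) ∈ [ρ₁⁰, ρ₁¹] ∪ [ρ₂⁰, ρ₂¹] a.e. in Ω_T and ρᵒ ∈ [ρ₁⁰, ρ₁¹] ∪ [ρ₂⁰, ρ₂¹] a.e. on Γ_T⁺.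 -/
open MeasureTheory Set

/-!
Confinement to a closed set `K` follows from renormalization with a `C¹` function `β` whose zero
set is exactly `K` (it exists because `Kᶜ` is the support of some smooth function): `β ∘ ρ₀` and
`β ∘ ρ_b` vanish a.e., so `(β ∘ ρ, β ∘ ρᵒ)` solves the problem with zero data, hence vanishes a.e.,
i.e. `ρ` and `ρᵒ` take values in `K` a.e.
-/

theorem IsClosed.exists_contDiff_zero_iff {E : Type*} [NormedAddCommGroup E] [NormedSpace ℝ E]
    [FiniteDimensional ℝ E] {n : ℕ∞} {K : Set E} (hK : IsClosed K) :
    ∃ β : E → ℝ, ContDiff ℝ n β ∧ ∀ y, β y = 0 ↔ y ∈ K := by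
  obtain ⟨β, hsupp, hβ, -⟩ := hK.isOpen_compl.exists_contDiff_support_eq (n := n)
  exact ⟨β, hβ, fun y => by rw [← Function.notMem_support, hsupp, mem_compl_iff, not_not]⟩

theorem renormalized_solution_ae_mem_of_isClosed
    {ΩT Ωsp ΓT : Type*} [MeasurableSpace ΩT] [MeasurableSpace Ωsp] [MeasurableSpace ΓT]
    {μT : Measure ΩT} {μΩ : Measure Ωsp} {μplus μminus : Measure ΓT}
    {Sol : (Ωsp → ℝ) → (ΓT → ℝ) → (ΩT → ℝ) × (ΓT → ℝ) → Prop}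
    {ρ0 : Ωsp → ℝ} {ρb : ΓT → ℝ} {ρ : ΩT → ℝ} {ρo : ΓT → ℝ} {K : Set ℝ} (hK : IsClosed K)
    (h0 : ∀ᵐ x ∂μΩ, ρ0 x ∈ K) (hb : ∀ᵐ x ∂μminus, ρb x ∈ K)
    (hren : ∀ β : ℝ → ℝ, ContDiff ℝ 1 β →
      Sol (fun x => β (ρ0 x)) (fun x => β (ρb x)) (fun x => β (ρ x), fun x => β (ρo x)))
    (hcongr : ∀ d0 d0' db db' p, (d0 =ᵐ[μΩ] d0') → (db =ᵐ[μminus] db') →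
      Sol d0 db p → Sol d0' db' p)
    (hzero : ∀ p, Sol (fun _ => 0) (fun _ => 0) p →
      (p.1 =ᵐ[μT] fun _ => 0) ∧ (p.2 =ᵐ[μplus] fun _ => 0)) :
    (∀ᵐ x ∂μT, ρ x ∈ K) ∧ (∀ᵐ x ∂μplus, ρo x ∈ K) := by
  obtain ⟨β, hβ, hβK⟩ := hK.exists_contDiff_zero_iff (n := 1)
  have hβ0 : (fun x => β (ρ0 x)) =ᵐ[μΩ] fun _ => 0 := h0.mono fun x hx => (hβK _).2 hx
  have hβb : (fun x => β (ρb x)) =ᵐ[μminus] fun _ => 0 := hb.mono fun x hx => (hβK _).2 hx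
  obtain ⟨hρ, hρo⟩ := hzero _ (hcongr _ _ _ _ _ hβ0 hβb (hren β hβ))
  exact ⟨hρ.mono fun x hx => (hβK _).1 hx, hρo.mono fun x hx => (hβK _).1 hx⟩

theorem stmt_14_general
    {ΩT Ωsp ΓT : Type*} [MeasurableSpace ΩT] [MeasurableSpace Ωsp] [MeasurableSpace ΓT]
    (μT : Measure ΩT) (μΩ : Measure Ωsp) (μplus μminus : Measure ΓT)
    (Sol : (Ωsp → ℝ) → (ΓT → ℝ) → (ΩT → ℝ) × (ΓT → ℝ) → Prop)
    (ρ0 : Ωsp → ℝ) (ρb : ΓT → ℝ) (ρ : ΩT → ℝ) (ρo : ΓT → ℝ)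
    (ρ10 ρ11 ρ20 ρ21 : ℝ)
    (h0 : ∀ᵐ x ∂μΩ, ρ0 x ∈ Icc ρ10 ρ11 ∪ Icc ρ20 ρ21)
    (hb : ∀ᵐ x ∂μminus, ρb x ∈ Icc ρ10 ρ11 ∪ Icc ρ20 ρ21)
    -- the pair (ρ,ρᵒ) is a renormalized solution
    (hren : ∀ β : ℝ → ℝ, ContDiff ℝ 1 β →
      Sol (fun x => β (ρ0 x)) (fun x => β (ρb x)) (fun x => β (ρ x), fun x => β (ρo x)))
    -- solutions depend only on the a.e. classes of the data
    (hcongr : ∀ d0 d0' db db' p, (d0 =ᵐ[μΩ] d0') → (db =ᵐ[μminus] db') →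
      Sol d0 db p → Sol d0' db' p)
    -- zero is the unique solution of the problem with zero data
    (hzero : ∀ p, Sol (fun _ => 0) (fun _ => 0) p →
      (p.1 =ᵐ[μT] fun _ => 0) ∧ (p.2 =ᵐ[μplus] fun _ => 0)) :
    (∀ᵐ x ∂μT, ρ x ∈ Icc ρ10 ρ11 ∪ Icc ρ20 ρ21) ∧
      (∀ᵐ x ∂μplus, ρo x ∈ Icc ρ10 ρ11 ∪ Icc ρ20 ρ21) :=
  renormalized_solution_ae_mem_of_isClosed (isClosed_Icc.union isClosed_Icc) h0 hb hren hcongr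
    hzero

/-- Two-interval confinement for the transport equation via renormalization:
if ρ₀ and ρ_b take values a.e. in [ρ₁⁰,ρ₁¹] ∪ [ρ₂⁰,ρ₂¹] (with ρ₁¹ < ρ₂⁰), if
(ρ,ρᵒ) is a renormalized solution, and if zero is the unique solution of the
transport problem with zero data, then ρ ∈ [ρ₁⁰,ρ₁¹] ∪ [ρ₂⁰,ρ₂¹] a.e. in Ω_T
and ρᵒ ∈ [ρ₁⁰,ρ₁¹] ∪ [ρ₂⁰,ρ₂¹] a.e. (for μ⁺) on Γ_T⁺. -/
theorem stmt_14
    {ΩT Ωsp ΓT : Type*} [MeasurableSpace ΩT] [MeasurableSpace Ωsp] [MeasurableSpace ΓT]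
    (μT : Measure ΩT) (μΩ : Measure Ωsp) (μplus μminus : Measure ΓT)
    (Sol : (Ωsp → ℝ) → (ΓT → ℝ) → (ΩT → ℝ) × (ΓT → ℝ) → Prop)
    (ρ0 : Ωsp → ℝ) (ρb : ΓT → ℝ) (ρ : ΩT → ℝ) (ρo : ΓT → ℝ)
    (ρ10 ρ11 ρ20 ρ21 : ℝ) (hord : ρ10 ≤ ρ11 ∧ ρ11 < ρ20 ∧ ρ20 ≤ ρ21)
    (h0 : ∀ᵐ x ∂μΩ, ρ0 x ∈ Icc ρ10 ρ11 ∪ Icc ρ20 ρ21)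
    (hb : ∀ᵐ x ∂μminus, ρb x ∈ Icc ρ10 ρ11 ∪ Icc ρ20 ρ21)
    (hsol : Sol ρ0 ρb (ρ, ρo))
    -- the pair (ρ,ρᵒ) is a renormalized solution
    (hren : ∀ β : ℝ → ℝ, ContDiff ℝ 1 β →
      Sol (fun x => β (ρ0 x)) (fun x => β (ρb x)) (fun x => β (ρ x), fun x => β (ρo x)))
    -- solutions depend only on the a.e. classes of the data
    (hcongr : ∀ d0 d0' db db' p, (d0 =ᵐ[μΩ] d0') → (db =ᵐ[μminus] db') →
      Sol d0 db p → Sol d0' db' p)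
    -- zero is the unique solution of the problem with zero data
    (hzero : ∀ p, Sol (fun _ => 0) (fun _ => 0) p →
      (p.1 =ᵐ[μT] fun _ => 0) ∧ (p.2 =ᵐ[μplus] fun _ => 0)) :
    (∀ᵐ x ∂μT, ρ x ∈ Icc ρ10 ρ11 ∪ Icc ρ20 ρ21) ∧
      (∀ᵐ x ∂μplus, ρo x ∈ Icc ρ10 ρ11 ∪ Icc ρ20 ρ21) :=
  stmt_14_general μT μΩ μplus μminus Sol ρ0 ρb ρ ρo ρ10 ρ11 ρ20 ρ21 h0 hb hren hcongr hzero
end
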